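/- arXiv:1901.04365 — 3 statements merged into one kernel-verified Lean document; each statement's English description precedes it below -/
import Mathlib

section
/- For every integer s \ge 2, the constant K_s = 2^{2s+1} s^2 (3s)!/(2s+1)! satisfies the upper bound K_s \le 2^{2s+1} s^2 (3s)!/(2s+1)! \cdot 2s/(s+2) when K_s is computed via the sum representation; equivalently, \sum_{k=0}^{s-1} (s+k)! (2s-k-1)! / ((2k+2)! (s-k-1)! (2s-2k)! k!) \le (3s)!/(s!(2s+2)!) \cdot 2s/(s+2). -/
/-!
Multiplied by `(2s+2)! / (s!)²`, the `k`-th summand becomes `w k * C(2s+2, 2k+2)` with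
`w k = C(s+k, k) * C(2s-k-1, s)`, and the right-hand side becomes `(∑ w k) * C(2s+2, s)`,
because `∑ w k = C(3s, 2s+1)` by comparing coefficients in `(1-X)^{-(s+1)} (1-X)^{-(s+1)} =
(1-X)^{-(2s+2)}`. Off the middle index `s+1`, every `C(2s+2, j)` is at most `C(2s+2, s)`.
For even `s` the index `2k+2` never hits the middle; for odd `s = 2n+3` the middle term `k = n+1`
is too large, but its excess is paid for by the deficit of the term `k = n`, since
`w (n+1) * (n+3) ≤ 3 * w n * (n+2)`.
-/

open Finset Nat

theorem sum_antidiagonal_add_choose_mul_add_choose (a b n : ℕ) :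
    ∑ ij ∈ antidiagonal n, (a + ij.1).choose a * (b + ij.2).choose b =
      (a + b + 1 + n).choose (a + b + 1) := by
  have h := congrArg (fun f ↦ PowerSeries.coeff n (Units.val f))
    (PowerSeries.invOneSubPow_add ℤ (a + 1) (b + 1))
  simp only [Units.val_mul, PowerSeries.coeff_mul, ← add_assoc,
    PowerSeries.invOneSubPow_val_succ_eq_mk_add_choose, PowerSeries.coeff_mk] at h
  rw [add_right_comm a 1 b] at h
  exact_mod_cast h.symm

theorem Nat.choose_le_choose_of_le_of_le_half {n a b : ℕ} (hab : a ≤ b) (hb : b ≤ n / 2) :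
    n.choose a ≤ n.choose b := by
  induction hab using Nat.decreasingInduction with
  | self => rfl
  | of_succ k hk ih => exact (choose_le_succ_of_lt_half_left (by omega)).trans ih

theorem Nat.choose_le_choose_of_ne_middle {s j : ℕ} (hj : j ≠ s + 1) :
    (2 * s + 2).choose j ≤ (2 * s + 2).choose s := by
  rcases le_or_gt j s with hjs | hjs
  · exact choose_le_choose_of_le_of_le_half hjs (by omega)
  rcases le_or_gt j (2 * s + 2) with hjn | hjn
  · rw [← choose_symm hjn]
    exact choose_le_choose_of_le_of_le_half (by omega) (by omega)
  · simp [choose_eq_zero_of_lt hjn]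

theorem Finset.sum_le_sum_of_le_off_pair {ι M : Type*} [DecidableEq ι] [AddCommMonoid M]
    [PartialOrder M] [IsOrderedAddMonoid M] {s : Finset ι} {f g : ι → M} {i j : ι}
    (hi : i ∈ s) (hj : j ∈ s) (hij : i ≠ j) (hpair : f i + f j ≤ g i + g j)
    (hrest : ∀ k ∈ s, k ≠ i → k ≠ j → f k ≤ g k) :
    ∑ k ∈ s, f k ≤ ∑ k ∈ s, g k := by
  have hj' : j ∈ s.erase i := mem_erase.2 ⟨hij.symm, hj⟩
  rw [← add_sum_erase s f hi, ← add_sum_erase s g hi, ← add_sum_erase _ f hj',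
    ← add_sum_erase _ g hj', ← add_assoc, ← add_assoc]
  refine add_le_add hpair (sum_le_sum fun k hk ↦ ?_)
  simp only [mem_erase] at hk
  exact hrest k hk.2.2 hk.2.1 hk.1

theorem mul_choose_add_mul_choose_le {N A B : ℕ} (h : A * (N + 4) ≤ 3 * B * (N + 2)) :
    A * (2 * N + 4).choose (N + 2) + B * (2 * N + 4).choose N ≤
      (A + B) * (2 * N + 4).choose (N + 1) := by
  have hP : (2 * N + 4).choose (N + 2) * (N + 2) = (2 * N + 4).choose (N + 1) * (N + 3) := by
    rw [choose_succ_right_eq]; congr 1; omega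
  have hR : (2 * N + 4).choose (N + 1) * (N + 1) = (2 * N + 4).choose N * (N + 4) := by
    rw [choose_succ_right_eq]; congr 1; omega
  generalize (2 * N + 4).choose (N + 2) = P at hP ⊢
  generalize (2 * N + 4).choose (N + 1) = Q at hP hR ⊢
  generalize (2 * N + 4).choose N = R at hR ⊢
  refine Nat.le_of_mul_le_mul_right ?_ (show 0 < (N + 2) * (N + 4) by positivity)
  calc (A * P + B * R) * ((N + 2) * (N + 4))
      = A * Q * ((N + 3) * (N + 4)) + B * Q * ((N + 1) * (N + 2)) := by
        linear_combination (A * (N + 4)) * hP - (B * (N + 2)) * hR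
    _ ≤ (A + B) * Q * ((N + 2) * (N + 4)) := by nlinarith [Nat.mul_le_mul_right Q h]

def weight (s k : ℕ) : ℕ := (s + k).choose k * (2 * s - k - 1).choose s

theorem sum_range_weight (s : ℕ) : ∑ k ∈ range s, weight s k = (3 * s).choose (2 * s + 1) := by
  obtain _ | n := s
  · simp
  have h := sum_antidiagonal_add_choose_mul_add_choose (n + 1) (n + 1) n
  rw [sum_antidiagonal_eq_sum_range_succ
    (fun i j ↦ (n + 1 + i).choose (n + 1) * (n + 1 + j).choose (n + 1))] at h
  rw [show 3 * (n + 1) = n + 1 + (n + 1) + 1 + n by omega,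
    show 2 * (n + 1) + 1 = n + 1 + (n + 1) + 1 by omega, ← h]
  refine sum_congr rfl fun k hk ↦ ?_
  rw [mem_range] at hk
  rw [weight, choose_symm_add, show 2 * (n + 1) - k - 1 = n + 1 + (n - k) by omega]

theorem weight_succ_mul_le (n : ℕ) :
    weight (2 * n + 3) (n + 1) * (2 * n + 6) ≤ 3 * weight (2 * n + 3) n * (2 * n + 4) := by
  have h₁ := add_one_mul_choose_eq (3 * n + 3) n
  have h₂ := choose_mul_succ_eq (3 * n + 4) (2 * n + 3)
  rw [show 3 * n + 4 + 1 - (2 * n + 3) = n + 2 by omega] at h₂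
  simp only [weight, show 2 * n + 3 + (n + 1) = 3 * n + 4 by ring,
    show 2 * (2 * n + 3) - (n + 1) - 1 = 3 * n + 4 by omega,
    show 2 * n + 3 + n = 3 * n + 3 by ring, show 2 * (2 * n + 3) - n - 1 = 3 * n + 5 by omega]
  generalize (3 * n + 4).choose (n + 1) = a at h₁ ⊢
  generalize (3 * n + 4).choose (2 * n + 3) = b at h₂ ⊢
  generalize (3 * n + 3).choose n = c at h₁ ⊢
  generalize (3 * n + 5).choose (2 * n + 3) = d at h₂ ⊢
  have key : (3 * n + 4) * (n + 2) * (2 * n + 6) ≤ 3 * (2 * n + 4) * ((n + 1) * (3 * n + 5)) := by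
    nlinarith [Nat.zero_le (n * n * n)]
  refine Nat.le_of_mul_le_mul_right ?_ (show 0 < (n + 1) * (3 * n + 5) by positivity)
  calc a * b * (2 * n + 6) * ((n + 1) * (3 * n + 5))
      = c * d * ((3 * n + 4) * (n + 2) * (2 * n + 6)) := by
        linear_combination (b * (3 * n + 5) * (2 * n + 6)) * h₁.symm +
          ((3 * n + 4) * c * (2 * n + 6)) * h₂
    _ ≤ c * d * (3 * (2 * n + 4) * ((n + 1) * (3 * n + 5))) := Nat.mul_le_mul_left _ key
    _ = 3 * (c * d) * (2 * n + 4) * ((n + 1) * (3 * n + 5)) := by ring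

theorem sum_weight_mul_choose_le {s : ℕ} (hs : s ≠ 1) :
    ∑ k ∈ range s, weight s k * (2 * s + 2).choose (2 * k + 2) ≤
      (∑ k ∈ range s, weight s k) * (2 * s + 2).choose s := by
  have off_middle (k : ℕ) (hk : 2 * k + 2 ≠ s + 1) :
      weight s k * (2 * s + 2).choose (2 * k + 2) ≤ weight s k * (2 * s + 2).choose s :=
    Nat.mul_le_mul_left _ (choose_le_choose_of_ne_middle hk)
  rw [sum_mul]
  rcases even_or_odd' s with ⟨m, hm | hm⟩
  · exact sum_le_sum fun k _ ↦ off_middle k (by omega)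
  obtain ⟨n, rfl⟩ : ∃ n, s = 2 * n + 3 := ⟨m - 1, by omega⟩
  refine sum_le_sum_of_le_off_pair (i := n + 1) (j := n) (mem_range.2 (by omega))
    (mem_range.2 (by omega))
    (by omega) ?_ fun k _ hk hk' ↦ off_middle k (by omega)
  have hpair := mul_choose_add_mul_choose_le (N := 2 * n + 2) (weight_succ_mul_le n)
  rwa [show 2 * (2 * n + 2) + 4 = 2 * (2 * n + 3) + 2 by ring,
    show 2 * n + 2 + 2 = 2 * (n + 1) + 2 by ring, show 2 * n + 2 + 1 = 2 * n + 3 by ring,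
    add_mul] at hpair

theorem factorial_ratio_eq_weight_mul_choose {s k : ℕ} (hk : k < s) :
    ((s + k)! * (2 * s - k - 1)! : ℝ) / ((2 * k + 2)! * (s - k - 1)! * (2 * s - 2 * k)! * k !) =
      (weight s k * (2 * s + 2).choose (2 * k + 2) : ℕ) * ((s ! * s ! : ℝ) / (2 * s + 2)!) := by
  push_cast [weight]
  rw [cast_choose ℝ (show k ≤ s + k by omega), cast_choose ℝ (show s ≤ 2 * s - k - 1 by omega),
    cast_choose ℝ (show 2 * k + 2 ≤ 2 * s + 2 by omega), show s + k - k = s by omega,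
    show 2 * s - k - 1 - s = s - k - 1 by omega,
    show 2 * s + 2 - (2 * k + 2) = 2 * s - 2 * k by omega]
  field_simp

theorem choose_mul_choose_mul_eq_factorial_ratio {s : ℕ} (hs : 0 < s) :
    ((3 * s).choose (2 * s + 1) * (2 * s + 2).choose s : ℕ) * ((s ! * s ! : ℝ) / (2 * s + 2)!) =
      ((3 * s)! : ℝ) / (s ! * (2 * s + 2)!) * ((2 * s : ℝ) / (s + 2)) := by
  obtain ⟨t, rfl⟩ : ∃ t, s = t + 1 := ⟨s - 1, by omega⟩
  push_cast
  rw [cast_choose ℝ (show 2 * (t + 1) + 1 ≤ 3 * (t + 1) by omega),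
    cast_choose ℝ (show t + 1 ≤ 2 * (t + 1) + 2 by omega),
    show 3 * (t + 1) - (2 * (t + 1) + 1) = t by omega,
    show 2 * (t + 1) + 2 - (t + 1) = t + 1 + 2 by omega]
  simp only [factorial_succ, show 2 * (t + 1) + 2 = 2 * t + 3 + 1 by ring,
    show 2 * (t + 1) + 1 = 2 * t + 3 by ring]
  push_cast
  field_simp
  ring

theorem stmt_3 (s : ℕ) (hs : 2 ≤ s) :
    ∑ k ∈ Finset.range s,
        ((Nat.factorial (s + k) : ℝ) * (Nat.factorial (2 * s - k - 1))) /
          ((Nat.factorial (2 * k + 2)) * (Nat.factorial (s - k - 1)) *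
            (Nat.factorial (2 * s - 2 * k)) * (Nat.factorial k)) ≤
      (Nat.factorial (3 * s) : ℝ) /
          ((Nat.factorial s) * (Nat.factorial (2 * s + 2))) *
        ((2 * s : ℝ) / ((s : ℝ) + 2)) := by
  rw [sum_congr rfl fun k hk ↦ factorial_ratio_eq_weight_mul_choose (mem_range.1 hk), ← sum_mul,
    ← choose_mul_choose_mul_eq_factorial_ratio (by omega : 0 < s), ← sum_range_weight]
  gcongr
  exact_mod_cast sum_weight_mul_choose_le (by omega)
end

section
/- Let f, g : \mathbb{R} \to \mathbb{R} be (s+1)-times differentiable on a finite interval (a,b) with |f| \le M_f, |g| \le M_g, |f^{(s+1)}| \le M_{f_{s+1}}, |g^{(s+1)}| \le M_{g_{s+1}} on (a,b). Then for all x in (a,b), |(fg)^{(s+1)}(x)| \le M_f M_{g_{s+1}} + M_{f_{s+1}} M_g + C_{s,f} C_{s,g} K_s / (b-a)^{s+1}, where C_{s,f} = M_f + (b-a)^{s+1} M_{f_{s+1}}/(s+1)!, C_{s,g} is defined analogously, and K_s = \sum_{k=1}^{s} \binom{s+1}{k} K(s+1-k,s) K(k,s). -/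
open Finset Set

/-- The constant `K(i,s)` from Ore's bound on intermediate derivatives. -/
noncomputable def oreK (i s : ℕ) : ℝ :=
  2 ^ i * (∏ j ∈ Finset.range i, ((s : ℝ) ^ 2 - (j : ℝ) ^ 2)) /
    (∏ j ∈ Finset.range i, ((2 * j : ℝ) + 1))

theorem stmt_5 (s : ℕ) (hs : 1 ≤ s) (a b : ℝ) (hab : a < b)
    (f g : ℝ → ℝ) (hf : ContDiff ℝ (s + 1 : ℕ) f) (hg : ContDiff ℝ (s + 1 : ℕ) g)
    (Mf Mg Mfs Mgs : ℝ)
    (hMf : ∀ x ∈ Ioo a b, |f x| ≤ Mf) (hMg : ∀ x ∈ Ioo a b, |g x| ≤ Mg)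
    (hMfs : ∀ x ∈ Ioo a b, |iteratedDeriv (s + 1) f x| ≤ Mfs)
    (hMgs : ∀ x ∈ Ioo a b, |iteratedDeriv (s + 1) g x| ≤ Mgs)
    -- Ore's bound on the intermediate derivatives (taken as a hypothesis):
    (hOref : ∀ i, 1 ≤ i → i ≤ s → ∀ x ∈ Ioo a b,
      |iteratedDeriv i f x| ≤
        oreK i s * (Mf + (b - a) ^ (s + 1) / (Nat.factorial (s + 1)) * Mfs) / (b - a) ^ i)
    (hOreg : ∀ i, 1 ≤ i → i ≤ s → ∀ x ∈ Ioo a b,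
      |iteratedDeriv i g x| ≤
        oreK i s * (Mg + (b - a) ^ (s + 1) / (Nat.factorial (s + 1)) * Mgs) / (b - a) ^ i) :
    ∀ x ∈ Ioo a b,
      |iteratedDeriv (s + 1) (fun y => f y * g y) x| ≤
        Mf * Mgs + Mfs * Mg +
          (Mf + (b - a) ^ (s + 1) / (Nat.factorial (s + 1)) * Mfs) *
            (Mg + (b - a) ^ (s + 1) / (Nat.factorial (s + 1)) * Mgs) /
            (b - a) ^ (s + 1) *
          (∑ k ∈ Finset.Icc 1 s,
            ((s + 1).choose k : ℝ) * oreK (s + 1 - k) s * oreK k s) := by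
  intro x hx
  set Cf : ℝ := Mf + (b - a) ^ (s + 1) / (Nat.factorial (s + 1)) * Mfs with hCf
  set Cg : ℝ := Mg + (b - a) ^ (s + 1) / (Nat.factorial (s + 1)) * Mgs with hCg
  have hb : (0:ℝ) < b - a := by linarith
  have key := norm_iteratedFDeriv_mul_le hf hg x
    (le_refl ((s + 1 : ℕ) : WithTop ℕ∞))
  simp only [norm_iteratedFDeriv_eq_norm_iteratedDeriv, Real.norm_eq_abs] at key
  set T : ℕ → ℝ := fun i =>
    ((s + 1).choose i : ℝ) * |iteratedDeriv i f x| * |iteratedDeriv (s + 1 - i) g x| with hT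
  have split : ∑ i ∈ Finset.range (s + 2), T i
      = T 0 + (∑ i ∈ Finset.Icc 1 s, T i) + T (s + 1) := by
    rw [Finset.sum_range_succ, Finset.range_eq_Ico,
      ← Finset.sum_Ico_consecutive T (Nat.zero_le 1) (by omega : 1 ≤ s + 1),
      Finset.Ico_add_one_right_eq_Icc]
    simp [Finset.Ico_add_one_right_eq_Icc]
  have hT0 : T 0 ≤ Mf * Mgs := by
    have h1 := hMf x hx
    have h2 := hMgs x hx
    simp only [hT, Nat.choose_zero_right, Nat.cast_one, one_mul, iteratedDeriv_zero,
      Nat.sub_zero]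
    exact mul_le_mul h1 h2 (abs_nonneg _) (le_trans (abs_nonneg _) h1)
  have hTs : T (s + 1) ≤ Mfs * Mg := by
    have h1 := hMfs x hx
    have h2 := hMg x hx
    simp only [hT, Nat.choose_self, Nat.cast_one, one_mul, Nat.sub_self, iteratedDeriv_zero]
    exact mul_le_mul h1 h2 (abs_nonneg _) (le_trans (abs_nonneg _) h1)
  have hmid : ∑ i ∈ Finset.Icc 1 s, T i ≤
      Cf * Cg / (b - a) ^ (s + 1) *
        ∑ k ∈ Finset.Icc 1 s, ((s + 1).choose k : ℝ) * oreK (s + 1 - k) s * oreK k s := by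
    rw [Finset.mul_sum]
    apply Finset.sum_le_sum
    intro k hk
    obtain ⟨hk1, hk2⟩ := Finset.mem_Icc.mp hk
    have hf' := hOref k hk1 hk2 x hx
    have hg' := hOreg (s + 1 - k) (by omega) (by omega) x hx
    have hbound : T k ≤ ((s + 1).choose k : ℝ) *
        (oreK k s * Cf / (b - a) ^ k) * (oreK (s + 1 - k) s * Cg / (b - a) ^ (s + 1 - k)) := by
      have hmul : |iteratedDeriv k f x| * |iteratedDeriv (s + 1 - k) g x| ≤
          (oreK k s * Cf / (b - a) ^ k) * (oreK (s + 1 - k) s * Cg / (b - a) ^ (s + 1 - k)) :=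
        mul_le_mul hf' hg' (abs_nonneg _) (le_trans (abs_nonneg _) hf')
      calc T k = ((s + 1).choose k : ℝ) *
            (|iteratedDeriv k f x| * |iteratedDeriv (s + 1 - k) g x|) := by
              simp only [hT]; ring
        _ ≤ _ := by
            rw [mul_assoc]
            exact mul_le_mul_of_nonneg_left hmul (by positivity)
    refine hbound.trans (le_of_eq ?_)
    have hpow : (b - a) ^ k * (b - a) ^ (s + 1 - k) = (b - a) ^ (s + 1) := by
      rw [← pow_add]; congr 1; omega
    have h1 : (b - a) ^ k ≠ 0 := by positivity
    have h2 : (b - a) ^ (s + 1 - k) ≠ 0 := by positivity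
    have h3 : (b - a) ^ (s + 1) ≠ 0 := by positivity
    field_simp
    rw [← hpow]
    ring
  have final : |iteratedDeriv (s + 1) (fun y => f y * g y) x| ≤
      Mf * Mgs + Mfs * Mg + Cf * Cg / (b - a) ^ (s + 1) *
        ∑ k ∈ Finset.Icc 1 s, ((s + 1).choose k : ℝ) * oreK (s + 1 - k) s * oreK k s := by
    calc |iteratedDeriv (s + 1) (fun y => f y * g y) x|
        ≤ ∑ i ∈ Finset.range (s + 2), T i := key
      _ = T 0 + (∑ i ∈ Finset.Icc 1 s, T i) + T (s + 1) := split
      _ ≤ _ := by linarith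
  exact final
end

section
/- Under the hypotheses of the windowed reconstruction theorem (with A_n(x) = |\psi_w(x) - S_n\psi_w(x)| \le 4L_s/(sn^s) on [-\rho,\rho] and K_\infty = sup_{[-\rho,\rho]}|\psi|(1-w)), the L^2 reconstruction error satisfies | \|\psi - R_n^w\psi\|^2_{L^2([-\rho,\rho])} - K_2 | \le 16\rho L_s K_\infty/(s n^s) + 32\rho L_s^2/(s^2 n^{2s}), where K_2 = \int_{-\rho}^{\rho} |\psi(x)|^2 (1 - w(x))^2 dx. -/
open Real Set intervalIntegral

set_option maxHeartbeats 1000000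

theorem stmt_18 (s n : ℕ) (hs : 1 ≤ s) (hn : 1 ≤ n) (ρ : ℝ) (hρ : 0 < ρ) (hρπ : ρ < π)
    (ψ w Sn : ℝ → ℝ) (hψ : Continuous ψ) (hwc : Continuous w) (hSn : Continuous Sn)
    (hw0 : ∀ x ∈ Set.Icc (-ρ) ρ, 0 ≤ w x) (hw1 : ∀ x ∈ Set.Icc (-ρ) ρ, w x ≤ 1)
    (L : ℝ) (hL : 0 < L)
    -- Jackson's bound for the partial Fourier sum `Sₙ` of `ψ_w = ψ·w`:
    (hJackson : ∀ x : ℝ, |ψ x * w x - Sn x| ≤ 4 * L / (s * n ^ s)) :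
    |(∫ x in (-ρ)..ρ, (ψ x - Sn x) ^ 2) -
        ∫ x in (-ρ)..ρ, (ψ x) ^ 2 * (1 - w x) ^ 2| ≤
      16 * ρ * L / (s * n ^ s) *
          sSup ((fun x => |ψ x| * (1 - w x)) '' Set.Icc (-ρ) ρ) +
        32 * ρ * L ^ 2 / ((s : ℝ) ^ 2 * (n : ℝ) ^ (2 * s)) := by
  have hρρ : -ρ ≤ ρ := by linarith
  set K := sSup ((fun x => |ψ x| * (1 - w x)) '' Set.Icc (-ρ) ρ) with hKdef
  have hbdd : BddAbove ((fun x => |ψ x| * (1 - w x)) '' Set.Icc (-ρ) ρ) :=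
    (isCompact_Icc.image (by continuity)).bddAbove
  have hKle : ∀ x ∈ Set.Icc (-ρ) ρ, |ψ x| * (1 - w x) ≤ K := fun x hx =>
    le_csSup hbdd ⟨x, hx, rfl⟩
  have h0mem : (0:ℝ) ∈ Set.Icc (-ρ) ρ := ⟨by linarith, by linarith⟩
  have hK0 : 0 ≤ K :=
    le_trans (mul_nonneg (abs_nonneg _) (by linarith [hw1 0 h0mem])) (hKle 0 h0mem)
  have hs0 : (0:ℝ) < s := by exact_mod_cast hs
  have hn0 : (0:ℝ) < n := by exact_mod_cast hn
  set ε : ℝ := 4 * L / (s * n ^ s) with hεdef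
  have hε0 : 0 < ε := by
    apply div_pos (by linarith)
    positivity
  have hf : IntervalIntegrable (fun x => (ψ x - Sn x) ^ 2) MeasureTheory.volume (-ρ) ρ :=
    (by continuity : Continuous fun x => (ψ x - Sn x) ^ 2).intervalIntegrable _ _
  have hg : IntervalIntegrable (fun x => (ψ x) ^ 2 * (1 - w x) ^ 2) MeasureTheory.volume (-ρ) ρ :=
    (by continuity : Continuous fun x => (ψ x) ^ 2 * (1 - w x) ^ 2).intervalIntegrable _ _
  rw [← intervalIntegral.integral_sub hf hg]
  have key : |∫ x in (-ρ)..ρ, ((ψ x - Sn x) ^ 2 - (ψ x) ^ 2 * (1 - w x) ^ 2)| ≤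
      (2 * K * ε + ε ^ 2) * |ρ - (-ρ)| := by
    rw [← Real.norm_eq_abs]
    apply intervalIntegral.norm_integral_le_of_norm_le_const
    intro x hx
    have hxIcc : x ∈ Set.Icc (-ρ) ρ := by
      rw [Set.uIoc_of_le hρρ] at hx
      exact ⟨le_of_lt hx.1, hx.2⟩
    have hA : |ψ x * w x - Sn x| ≤ ε := hJackson x
    have hnw : (0:ℝ) ≤ 1 - w x := by linarith [hw1 x hxIcc]
    have ha : |ψ x * (1 - w x)| ≤ K := by
      rw [abs_mul, abs_of_nonneg hnw]
      exact hKle x hxIcc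
    have heq : (ψ x - Sn x) ^ 2 - (ψ x) ^ 2 * (1 - w x) ^ 2 =
        2 * (ψ x * (1 - w x)) * (ψ x * w x - Sn x) + (ψ x * w x - Sn x) ^ 2 := by ring
    rw [Real.norm_eq_abs, heq]
    have hA0 : 0 ≤ |ψ x * w x - Sn x| := abs_nonneg _
    calc |2 * (ψ x * (1 - w x)) * (ψ x * w x - Sn x) + (ψ x * w x - Sn x) ^ 2|
        ≤ |2 * (ψ x * (1 - w x)) * (ψ x * w x - Sn x)| + |(ψ x * w x - Sn x) ^ 2| :=
          abs_add_le _ _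
      _ = 2 * |ψ x * (1 - w x)| * |ψ x * w x - Sn x| + |ψ x * w x - Sn x| ^ 2 := by
          rw [abs_mul, abs_mul, abs_two, abs_pow]
      _ ≤ 2 * K * ε + ε ^ 2 := by
          have h1 : 2 * |ψ x * (1 - w x)| * |ψ x * w x - Sn x| ≤ 2 * K * ε := by
            apply mul_le_mul (by linarith) hA hA0 (by linarith)
          have h2 : |ψ x * w x - Sn x| ^ 2 ≤ ε ^ 2 := by
            apply pow_le_pow_left₀ hA0 hA
          linarith
  have habs : |ρ - (-ρ)| = 2 * ρ := by
    rw [abs_of_nonneg (by linarith)]; ring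
  rw [habs] at key
  refine le_trans key (le_of_eq ?_)
  rw [hεdef]
  have hpow : (n:ℝ) ^ (2 * s) = ((n:ℝ) ^ s) ^ 2 := by
    rw [mul_comm, pow_mul]
  rw [hpow]
  have hsn : (s:ℝ) * (n:ℝ) ^ s ≠ 0 := by positivity
  field_simp
  ring
end
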